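/- Fix p with 1 < p ≤ 2 and 0 < ε₋ ≤ ε₊ < ∞. Then for every t ≥ 0 and every λ ≥ 1 one has λ^p · φ_ε(t) ≤ φ_ε(λt) ≤ λ² · φ_ε(t). In particular φ_ε satisfies the Δ₂-condition φ_ε(2t) ≤ 4 φ_ε(t) with a constant independent of ε₋ and ε₊, and the Simonenko indices of φ_ε lie within [p, 2]. -/
import Mathlib

/-- The relaxed integrand `κ_ε`. -/
noncomputable def kappaEps (p εm εp t : ℝ) : ℝ :=
  if t ≤ εm then (1 / 2) * εm ^ (p - 2) * t ^ 2 + (1 / p - 1 / 2) * εm ^ p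
  else if t ≤ εp then (1 / p) * t ^ p
  else (1 / 2) * εp ^ (p - 2) * t ^ 2 + (1 / p - 1 / 2) * εp ^ p

/-- The N-function `φ_ε(t) = κ_ε(t) - κ_ε(0)`. -/
noncomputable def phiEps (p εm εp t : ℝ) : ℝ :=
  kappaEps p εm εp t - kappaEps p εm εp 0

noncomputable def gEps (p εm εp s : ℝ) : ℝ := s * (min (max s εm) εp) ^ (p - 2)

section aux
variable {p εm εp : ℝ}

lemma clamp_pos (hεm : 0 < εm) (hε : εm ≤ εp) (s : ℝ) :
    0 < min (max s εm) εp :=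
  lt_min (lt_of_lt_of_le hεm (le_max_right _ _)) (lt_of_lt_of_le hεm hε)

lemma gEps_cont (hεm : 0 < εm) (hε : εm ≤ εp) : Continuous (gEps p εm εp) := by
  apply continuous_id.mul
  apply Continuous.rpow_const ((continuous_id.max continuous_const).min continuous_const)
  intro s
  exact Or.inl (ne_of_gt (clamp_pos hεm hε s))

lemma gEps_intble (hεm : 0 < εm) (hε : εm ≤ εp) (a b : ℝ) :
    IntervalIntegrable (gEps p εm εp) MeasureTheory.volume a b :=
  (gEps_cont hεm hε).intervalIntegrable a b

/-- integral of `g` from `0` to `t` equals `φ`, for `t ≥ 0`. -/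
lemma phi_eq_integral (hp1 : 1 < p) (hεm : 0 < εm) (hε : εm ≤ εp)
    {t : ℝ} (ht : 0 ≤ t) :
    phiEps p εm εp t = ∫ s in (0:ℝ)..t, gEps p εm εp s := by
  have hεp : 0 < εp := lt_of_lt_of_le hεm hε
  have hp0 : p ≠ 0 := by linarith
  have hA : ∀ u : ℝ, 0 ≤ u → u ≤ εm →
      (∫ s in (0:ℝ)..u, gEps p εm εp s) = 1/2 * εm ^ (p-2) * u ^ 2 := by
    intro u hu0 hu
    have heq : (∫ s in (0:ℝ)..u, gEps p εm εp s) = ∫ s in (0:ℝ)..u, εm ^ (p-2) * s := by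
      apply intervalIntegral.integral_congr
      intro s hs
      rw [Set.uIcc_of_le hu0] at hs
      have h1 : max s εm = εm := max_eq_right (hs.2.trans hu)
      have h2 : min εm εp = εm := min_eq_left hε
      simp [gEps, h1, h2, mul_comm]
    rw [heq, intervalIntegral.integral_const_mul, integral_id]
    ring
  have hB : ∀ u : ℝ, εm ≤ u → u ≤ εp →
      (∫ s in εm..u, gEps p εm εp s) = (u ^ p - εm ^ p) / p := by
    intro u hmu hu
    have heq : (∫ s in εm..u, gEps p εm εp s) = ∫ s in εm..u, s ^ (p-1) := by
      apply intervalIntegral.integral_congr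
      intro s hs
      rw [Set.uIcc_of_le hmu] at hs
      have h1 : max s εm = s := max_eq_left hs.1
      have h2 : min s εp = s := min_eq_left (hs.2.trans hu)
      have hs0 : 0 < s := lt_of_lt_of_le hεm hs.1
      show gEps p εm εp s = s ^ (p - 1)
      rw [gEps, h1, h2, show p - 1 = (p - 2) + 1 by ring, Real.rpow_add hs0, Real.rpow_one]
      ring
    rw [heq, integral_rpow (Or.inl (by linarith))]
    rw [show p - 1 + 1 = p by ring]
  rcases le_or_gt t εm with h1 | h1
  · rw [hA t ht h1]
    simp only [phiEps, kappaEps, if_pos h1, if_pos hεm.le]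
    ring_nf
  · have hεmt : εm ≤ t := h1.le
    have hsplit : (∫ s in (0:ℝ)..t, gEps p εm εp s)
        = (∫ s in (0:ℝ)..εm, gEps p εm εp s) + ∫ s in εm..t, gEps p εm εp s :=
      (intervalIntegral.integral_add_adjacent_intervals
        (gEps_intble hεm hε 0 εm) (gEps_intble hεm hε εm t)).symm
    have hεmp : εm ^ (p-2) * εm ^ 2 = εm ^ p := by
      rw [show (εm:ℝ) ^ (2:ℕ) = εm ^ (2:ℝ) by rw [← Real.rpow_natCast εm 2]; norm_num,
        ← Real.rpow_add hεm]
      norm_num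
    rcases le_or_gt t εp with h2 | h2
    · rw [hsplit, hA εm hεm.le le_rfl, hB t hεmt h2]
      simp only [phiEps, kappaEps, if_neg (not_le.mpr h1), if_pos h2, if_pos hεm.le]
      linear_combination (-(1/2) : ℝ) * hεmp
    · have hεpt : εp ≤ t := h2.le
      have hsplit2 : (∫ s in εm..t, gEps p εm εp s)
          = (∫ s in εm..εp, gEps p εm εp s) + ∫ s in εp..t, gEps p εm εp s :=
        (intervalIntegral.integral_add_adjacent_intervals
          (gEps_intble hεm hε εm εp) (gEps_intble hεm hε εp t)).symm
      have hC : (∫ s in εp..t, gEps p εm εp s) = εp ^ (p-2) * ((t^2 - εp^2)/2) := by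
        have heq : (∫ s in εp..t, gEps p εm εp s) = ∫ s in εp..t, εp ^ (p-2) * s := by
          apply intervalIntegral.integral_congr
          intro s hs
          rw [Set.uIcc_of_le hεpt] at hs
          have hsm : max s εm = s := max_eq_left (hε.trans hs.1)
          have h2' : min s εp = εp := min_eq_right hs.1
          simp [gEps, hsm, h2', mul_comm]
        rw [heq, intervalIntegral.integral_const_mul, integral_id]
      have hεpp : εp ^ (p-2) * εp ^ 2 = εp ^ p := by
        rw [show (εp:ℝ) ^ (2:ℕ) = εp ^ (2:ℝ) by rw [← Real.rpow_natCast εp 2]; norm_num,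
          ← Real.rpow_add hεp]
        norm_num
      rw [hsplit, hsplit2, hA εm hεm.le le_rfl, hB εp hε le_rfl, hC]
      simp only [phiEps, kappaEps, if_neg (not_le.mpr h1), if_neg (not_le.mpr h2),
        if_pos hεm.le]
      linear_combination (-(1/2) : ℝ) * hεmp + (1/2 : ℝ) * hεpp

/-- pointwise bounds on `g`. -/
lemma gEps_bounds (hp1 : 1 < p) (hp2 : p ≤ 2) (hεm : 0 < εm) (hε : εm ≤ εp)
    {s lam : ℝ} (hs : 0 ≤ s) (hl : 1 ≤ lam) :
    lam ^ (p-1) * gEps p εm εp s ≤ gEps p εm εp (lam * s) ∧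
    gEps p εm εp (lam * s) ≤ lam * gEps p εm εp s := by
  have hl0 : 0 < lam := lt_of_lt_of_le one_pos hl
  have hεp : 0 < εp := lt_of_lt_of_le hεm hε
  set c := min (max s εm) εp with hc
  set c' := min (max (lam * s) εm) εp with hc'
  have hcpos : 0 < c := clamp_pos hεm hε s
  have hc'pos : 0 < c' := clamp_pos hεm hε (lam * s)
  have hss : s ≤ lam * s := le_mul_of_one_le_left hs hl
  have hcc' : c ≤ c' := min_le_min (max_le_max hss le_rfl) le_rfl
  have hc'le : c' ≤ lam * c := by
    have h1 : max (lam * s) εm ≤ lam * max s εm := by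
      apply max_le
      · exact mul_le_mul_of_nonneg_left (le_max_left _ _) hl0.le
      · calc εm ≤ max s εm := le_max_right _ _
          _ ≤ lam * max s εm := le_mul_of_one_le_left
              (le_trans hεm.le (le_max_right _ _)) hl
    calc c' ≤ min (lam * max s εm) (lam * εp) :=
          min_le_min h1 (le_mul_of_one_le_left hεp.le hl)
      _ = lam * c := (mul_min_of_nonneg _ _ hl0.le).symm
  constructor
  · have key : (lam * c) ^ (p-2) ≤ c' ^ (p-2) :=
      Real.rpow_le_rpow_of_nonpos hc'pos hc'le (by linarith)
    have hmul : (lam * c) ^ (p-2) = lam ^ (p-2) * c ^ (p-2) :=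
      Real.mul_rpow hl0.le hcpos.le
    have hlp : lam ^ (p-1) = lam ^ (p-2) * lam := by
      have h := Real.rpow_add hl0 (p-2) 1
      rw [Real.rpow_one] at h
      rw [show p - 1 = p - 2 + 1 by ring, h]
    calc lam ^ (p-1) * gEps p εm εp s
        = (lam * s) * (lam ^ (p-2) * c ^ (p-2)) := by rw [gEps, hlp, ← hc]; ring
      _ = (lam * s) * (lam * c) ^ (p-2) := by rw [hmul]
      _ ≤ (lam * s) * c' ^ (p-2) := by
          apply mul_le_mul_of_nonneg_left key (by positivity)
      _ = gEps p εm εp (lam * s) := by rw [gEps, ← hc']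
  · have key : c' ^ (p-2) ≤ c ^ (p-2) :=
      Real.rpow_le_rpow_of_nonpos hcpos hcc' (by linarith)
    calc gEps p εm εp (lam * s) = (lam * s) * c' ^ (p-2) := by rw [gEps, ← hc']
      _ ≤ (lam * s) * c ^ (p-2) := by
          apply mul_le_mul_of_nonneg_left key (by positivity)
      _ = lam * gEps p εm εp s := by rw [gEps, ← hc]; ring

end aux

/-- `λ^p φ_ε(t) ≤ φ_ε(λ t) ≤ λ² φ_ε(t)` for `λ ≥ 1`, `t ≥ 0`;
in particular the Δ₂-condition `φ_ε(2t) ≤ 4 φ_ε(t)` holds with constant independent of `ε`. -/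
theorem stmt_12 (p εm εp : ℝ) (hp1 : 1 < p) (hp2 : p ≤ 2)
    (hεm : 0 < εm) (hε : εm ≤ εp) :
    ∀ t : ℝ, 0 ≤ t → ∀ lam : ℝ, 1 ≤ lam →
      (lam ^ p * phiEps p εm εp t ≤ phiEps p εm εp (lam * t) ∧
       phiEps p εm εp (lam * t) ≤ lam ^ 2 * phiEps p εm εp t) ∧
      phiEps p εm εp (2 * t) ≤ 4 * phiEps p εm εp t := by
  intro t ht lam hl
  have key : ∀ μ : ℝ, 1 ≤ μ →
      μ ^ p * phiEps p εm εp t ≤ phiEps p εm εp (μ * t) ∧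
      phiEps p εm εp (μ * t) ≤ μ ^ 2 * phiEps p εm εp t := by
    intro μ hμ
    have hμ0 : (0:ℝ) < μ := lt_of_lt_of_le one_pos hμ
    have hμt : 0 ≤ μ * t := by positivity
    rw [phi_eq_integral hp1 hεm hε ht, phi_eq_integral hp1 hεm hε hμt]
    have hsub := intervalIntegral.mul_integral_comp_mul_left
      (a := 0) (b := t) (c := μ) (f := gEps p εm εp)
    rw [mul_zero] at hsub
    rw [← hsub]
    have hcont : Continuous fun s => gEps p εm εp (μ * s) :=
      (gEps_cont hεm hε).comp (continuous_const.mul continuous_id)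
    have hμp : μ ^ p = μ * μ ^ (p - 1) := by
      have h := Real.rpow_add hμ0 1 (p - 1)
      rw [Real.rpow_one] at h
      rw [show p = 1 + (p - 1) by ring]
      rw [h]
      ring_nf
    constructor
    · have hmono : (∫ s in (0:ℝ)..t, μ ^ (p-1) * gEps p εm εp s)
          ≤ ∫ s in (0:ℝ)..t, gEps p εm εp (μ * s) := by
        apply intervalIntegral.integral_mono_on ht
          ((continuous_const.mul (gEps_cont hεm hε)).intervalIntegrable _ _)
          (hcont.intervalIntegrable _ _)
        exact fun s hs => (gEps_bounds hp1 hp2 hεm hε hs.1 hμ).1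
      rw [intervalIntegral.integral_const_mul] at hmono
      calc μ ^ p * ∫ s in (0:ℝ)..t, gEps p εm εp s
          = μ * (μ ^ (p-1) * ∫ s in (0:ℝ)..t, gEps p εm εp s) := by rw [hμp]; ring
        _ ≤ μ * ∫ s in (0:ℝ)..t, gEps p εm εp (μ * s) :=
            mul_le_mul_of_nonneg_left hmono hμ0.le
    · have hmono : (∫ s in (0:ℝ)..t, gEps p εm εp (μ * s))
          ≤ ∫ s in (0:ℝ)..t, μ * gEps p εm εp s := by
        apply intervalIntegral.integral_mono_on ht
          (hcont.intervalIntegrable _ _)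
          ((continuous_const.mul (gEps_cont hεm hε)).intervalIntegrable _ _)
        exact fun s hs => (gEps_bounds hp1 hp2 hεm hε hs.1 hμ).2
      rw [intervalIntegral.integral_const_mul] at hmono
      calc μ * ∫ s in (0:ℝ)..t, gEps p εm εp (μ * s)
          ≤ μ * (μ * ∫ s in (0:ℝ)..t, gEps p εm εp s) :=
            mul_le_mul_of_nonneg_left hmono hμ0.le
        _ = μ ^ 2 * ∫ s in (0:ℝ)..t, gEps p εm εp s := by ring
  refine ⟨key lam hl, ?_⟩
  have h2 := (key 2 one_le_two).2
  norm_num at h2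
  linarith
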